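/- Let H and G be real Hilbert spaces, let M : H → G be a bounded linear operator such that M M* = θ Id for some θ > 0, let D be a nonempty closed convex subset of G, let μ > 0, let φ : ℝ → ℝ be even, convex, and differentiable with a μ-Lipschitzian derivative, and set h = φ ∘ d_D ∘ M. Then h : H → ℝ is convex and Fréchet differentiable with a μ‖M‖²-Lipschitzian gradient, and for every x ∈ H the gradient of h at x equals (φ'(d_D(Mx))/d_D(Mx)) M*(Mx − proj_D(Mx)) if Mx ∉ D, and equals 0 if Mx ∈ D. -/

import Mathlib

/-!
Write `g = φ ∘ d_D`, `r = d_D(y) = ‖y - P y‖` and `v y = (φ' r / r) • (y - P y)`. Since `φ'` is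
monotone, vanishes at `0` (evenness) and is `μ`-Lipschitz, `φ' r / r ∈ [0, μ]`; at `r = 0` the
junk value `φ' 0 / 0 = 0` is harmless because `y - P y = 0`. For all `y, z`,
`g y + ⟪v y, z - y⟫ ≤ g z ≤ g y + ⟪v y, z - y⟫ + μ / 2 ‖z - y‖²`:
the lower bound is the tangent inequality of `φ` combined with the subgradient inequality of `d_D`
(obtuse-angle characterisation of `P`), the upper one is the descent lemma for `φ` combined with
`d_D z ≤ ‖z - P y‖`. The bounds pass to `h = g ∘ M` with the field `M* ∘ v ∘ M`, and such
two-sided bounds make the field the gradient and the function convex. By Baillon–Haddad `v` is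
`μ`-Lipschitz, so `∇h = M* ∘ v ∘ M` is `μ‖M‖²`-Lipschitz.
-/

open Set Metric
open scoped NNReal RealInnerProductSpace

section RealFunction

variable {φ φ' : ℝ → ℝ}

theorem ConvexOn.add_mul_sub_le_of_hasDerivAt (hφ : ConvexOn ℝ univ φ) {r d : ℝ}
    (hd : HasDerivAt φ d r) (t : ℝ) : φ r + d * (t - r) ≤ φ t := by
  rcases lt_trichotomy r t with hrt | rfl | htr
  · have hs := hφ.le_slope_of_hasDerivAt (mem_univ r) (mem_univ t) hrt hd
    rw [slope_def_field, le_div_iff₀ (sub_pos.2 hrt)] at hs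
    linarith
  · simp
  · have hs := hφ.slope_le_of_hasDerivAt (mem_univ t) (mem_univ r) htr hd
    rw [slope_def_field, div_le_iff₀ (sub_pos.2 htr)] at hs
    linarith

theorem ConvexOn.monotone_of_hasDerivAt (hφ : ConvexOn ℝ univ φ)
    (hd : ∀ t, HasDerivAt φ (φ' t) t) : Monotone φ' := by
  have hderiv : deriv φ = φ' := funext fun t => (hd t).deriv
  simpa [hderiv] using hφ.monotoneOn_deriv fun t _ => (hd t).differentiableAt

theorem eq_zero_of_even_of_hasDerivAt (heven : ∀ t, φ (-t) = φ t) (hd : HasDerivAt φ (φ' 0) 0) :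
    φ' 0 = 0 := by
  have h := deriv_comp_neg (f := φ) (x := 0)
  simp only [heven, neg_zero, hd.deriv] at h
  linarith

/-- Descent lemma: `t ↦ K t² / 2 - φ t` has monotone derivative, hence is convex, and its
tangent inequality is the claim. -/
theorem le_add_mul_sub_add_sq_of_lipschitzWith {K : ℝ≥0} (hd : ∀ t, HasDerivAt φ (φ' t) t)
    (hlip : LipschitzWith K φ') (r s : ℝ) :
    φ s ≤ φ r + φ' r * (s - r) + K / 2 * (s - r) ^ 2 := by
  set χ : ℝ → ℝ := fun t => K / 2 * t ^ 2 - φ t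
  have hχ : ∀ t, HasDerivAt χ (K * t - φ' t) t := fun t =>
    (((hasDerivAt_pow 2 t).const_mul ((K : ℝ) / 2)).sub (hd t)).congr_deriv (by ring)
  have hmono : Monotone (deriv χ) := by
    intro a b hab
    have h := hlip.dist_le_mul b a
    rw [Real.dist_eq, Real.dist_eq, abs_of_nonneg (sub_nonneg.2 hab)] at h
    simp only [(hχ _).deriv]
    linarith [le_abs_self (φ' b - φ' a)]
  have hconv := hmono.convexOn_univ_of_deriv fun t => (hχ t).differentiableAt
  have := hconv.add_mul_sub_le_of_hasDerivAt (hχ r) s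
  simp only [χ] at this
  linarith

end RealFunction

section NearestPoint

def IsNearestPointMap {X : Type*} [PseudoMetricSpace X] (D : Set X) (P : X → X) : Prop :=
  ∀ y, P y ∈ D ∧ ∀ z ∈ D, dist y (P y) ≤ dist y z

namespace IsNearestPointMap

theorem infDist_eq {X : Type*} [PseudoMetricSpace X] {D : Set X} {P : X → X}
    (hP : IsNearestPointMap D P) (y : X) : infDist y D = dist y (P y) := by
  have : Nonempty D := ⟨⟨P y, (hP y).1⟩⟩
  exact le_antisymm (infDist_le_dist_of_mem (hP y).1)
    (infDist_eq_iInf (x := y) ▸ le_ciInf fun z => (hP y).2 z z.2)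

theorem apply_eq_self {X : Type*} [MetricSpace X] {D : Set X} {P : X → X}
    (hP : IsNearestPointMap D P) {y : X} (hy : y ∈ D) : P y = y :=
  (by simpa using (hP y).2 y hy : y = P y).symm

variable {G : Type*} [NormedAddCommGroup G] [InnerProductSpace ℝ G] {D : Set G} {P : G → G}

theorem inner_sub_le_zero (hP : IsNearestPointMap D P) (hD : Convex ℝ D) (y : G) {c : G}
    (hc : c ∈ D) : ⟪y - P y, c - P y⟫ ≤ 0 := by
  refine (norm_eq_iInf_iff_real_inner_le_zero hD (hP y).1).1 ?_ c hc
  have : Nonempty D := ⟨⟨P y, (hP y).1⟩⟩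
  simp [← dist_eq_norm, ← hP.infDist_eq, infDist_eq_iInf]

/-- `(y - P y) / infDist y D` is a subgradient of `infDist · D` at `y`. -/
theorem inner_sub_le_infDist_mul (hP : IsNearestPointMap D P) (hD : Convex ℝ D) (y z : G) :
    ⟪y - P y, z - y⟫ ≤ infDist y D * (infDist z D - infDist y D) := by
  have hobtuse : 0 ≤ ⟪y - P y, P y - P z⟫ := by
    have := hP.inner_sub_le_zero hD y (hP z).1
    rw [← neg_sub (P y) (P z), inner_neg_right] at this
    linarith
  have hsplit : z - P z = (z - y) + (y - P y) + (P y - P z) := by abel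
  have hcs : ⟪y - P y, z - P z⟫ ≤ infDist y D * infDist z D := by
    rw [hP.infDist_eq, hP.infDist_eq, dist_eq_norm, dist_eq_norm]
    exact real_inner_le_norm _ _
  rw [hsplit, inner_add_right, inner_add_right, real_inner_self_eq_norm_sq, ← dist_eq_norm,
    ← hP.infDist_eq] at hcs
  linarith

end IsNearestPointMap

end NearestPoint

section CompInfDist

variable {G : Type*} [NormedAddCommGroup G] [InnerProductSpace ℝ G] {D : Set G} {P : G → G}
  {φ φ' : ℝ → ℝ}

theorem comp_infDist_add_inner_le (hP : IsNearestPointMap D P) (hD : Convex ℝ D)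
    (hφ : ConvexOn ℝ univ φ) (hd : ∀ t, HasDerivAt φ (φ' t) t) (h0 : φ' 0 = 0) (y z : G) :
    φ (infDist y D) + ⟪(φ' (infDist y D) / infDist y D) • (y - P y), z - y⟫
      ≤ φ (infDist z D) := by
  set r := infDist y D
  have hr : 0 ≤ r := infDist_nonneg
  have hc : 0 ≤ φ' r / r := div_nonneg (h0 ▸ hφ.monotone_of_hasDerivAt hd hr) hr
  have hcr : φ' r / r * r = φ' r := div_mul_cancel_of_imp fun h => by rw [h, h0]
  calc φ r + ⟪(φ' r / r) • (y - P y), z - y⟫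
      ≤ φ r + φ' r / r * (r * (infDist z D - r)) := by
        rw [real_inner_smul_left]
        gcongr
        exact hP.inner_sub_le_infDist_mul hD y z
    _ = φ r + φ' r * (infDist z D - r) := by rw [← mul_assoc, hcr]
    _ ≤ φ (infDist z D) := hφ.add_mul_sub_le_of_hasDerivAt (hd r) _

theorem comp_infDist_le_add_inner_add_sq {K : ℝ≥0} (hP : IsNearestPointMap D P)
    (hφ : ConvexOn ℝ univ φ) (hd : ∀ t, HasDerivAt φ (φ' t) t) (h0 : φ' 0 = 0)
    (hlip : LipschitzWith K φ') (y z : G) :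
    φ (infDist z D) ≤ φ (infDist y D) + ⟪(φ' (infDist y D) / infDist y D) • (y - P y), z - y⟫
      + K / 2 * ‖z - y‖ ^ 2 := by
  set r := infDist y D
  set s := ‖z - P y‖
  have hr : 0 ≤ r := infDist_nonneg
  have hre : r = ‖y - P y‖ := (hP.infDist_eq y).trans (dist_eq_norm _ _)
  have hmono := hφ.monotone_of_hasDerivAt hd
  have hc : 0 ≤ φ' r / r := div_nonneg (h0 ▸ hmono hr) hr
  have hcK : φ' r / r ≤ K := by
    refine div_le_of_le_mul₀ hr K.2 ?_
    have := hlip.dist_le_mul r 0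
    rw [Real.dist_eq, Real.dist_eq, h0, sub_zero, sub_zero, abs_of_nonneg hr] at this
    exact (le_abs_self _).trans this
  have hcr : φ' r / r * r = φ' r := div_mul_cancel_of_imp fun h => by rw [h, h0]
  have hzs : φ (infDist z D) ≤ φ s := by
    have hdz : infDist z D ≤ s := (infDist_le_dist_of_mem (hP y).1).trans_eq (dist_eq_norm _ _)
    have := hφ.add_mul_sub_le_of_hasDerivAt (hd (infDist z D)) s
    linarith [mul_nonneg (h0 ▸ hmono infDist_nonneg : 0 ≤ φ' (infDist z D)) (sub_nonneg.2 hdz)]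
  have hdesc := le_add_mul_sub_add_sq_of_lipschitzWith hd hlip r s
  have hs : s ^ 2 = ‖z - y‖ ^ 2 + 2 * ⟪z - y, y - P y⟫ + r ^ 2 := by
    rw [hre, ← norm_add_sq_real, sub_add_sub_cancel]
  have hsr : (s - r) ^ 2 ≤ ‖z - y‖ ^ 2 := by
    have habs : |s - r| ≤ ‖z - y‖ := by
      rw [hre, ← sub_sub_sub_cancel_right z y (P y)]
      exact abs_norm_sub_norm_le _ _
    exact sq_le_sq' (abs_le.1 habs).1 (abs_le.1 habs).2
  rw [← hcr] at hdesc
  rw [real_inner_smul_left, real_inner_comm]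
  -- by `hs`, the gap between the two sides is `(K - φ' r / r) / 2 * (‖z - y‖ ^ 2 - (s - r) ^ 2)`
  nlinarith [mul_nonneg (sub_nonneg.2 hcK) (sub_nonneg.2 hsr)]

end CompInfDist

section SmoothConvexBounds

variable {E F : Type*} [NormedAddCommGroup E] [InnerProductSpace ℝ E]
  [NormedAddCommGroup F] [InnerProductSpace ℝ F]

/-- The two-sided bounds characterising a convex function with `K`-Lipschitz gradient `v`. -/
structure HasSmoothConvexBounds (f : E → ℝ) (v : E → E) (K : ℝ≥0) : Prop where
  lower : ∀ x z, f x + ⟪v x, z - x⟫ ≤ f z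
  upper : ∀ x z, f z ≤ f x + ⟪v x, z - x⟫ + K / 2 * ‖z - x‖ ^ 2

namespace HasSmoothConvexBounds

variable {f : E → ℝ} {v : E → E} {K : ℝ≥0}

theorem convexOn (hS : HasSmoothConvexBounds f v K) : ConvexOn ℝ univ f := by
  refine ⟨convex_univ, fun x _ z _ a b ha hb hab => ?_⟩
  set p := a • x + b • z
  have hbalance : a * ⟪v p, x - p⟫ + b * ⟪v p, z - p⟫ = 0 := by
    rw [← real_inner_smul_right, ← real_inner_smul_right, ← inner_add_right]
    convert inner_zero_right (v p) using 2
    rw [smul_sub, smul_sub, sub_add_sub_comm, ← add_smul, hab, one_smul, sub_self]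
  have hx := mul_le_mul_of_nonneg_left (hS.lower p x) ha
  have hz := mul_le_mul_of_nonneg_left (hS.lower p z) hb
  have hfp : f p = a * f p + b * f p := by rw [← add_mul, hab, one_mul]
  simp only [smul_eq_mul]
  linarith

theorem hasGradientAt [CompleteSpace E] (hS : HasSmoothConvexBounds f v K) (x : E) :
    HasGradientAt f (v x) x := by
  rw [hasGradientAt_iff_isLittleO]
  refine Asymptotics.IsBigO.trans_isLittleO ?_ (Asymptotics.isLittleO_pow_sub_sub x one_lt_two)
  refine Asymptotics.IsBigO.of_bound (K / 2) (Filter.Eventually.of_forall fun z => ?_)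
  rw [Real.norm_eq_abs, norm_pow, norm_norm, abs_le]
  constructor <;> linarith [hS.lower x z, hS.upper x z, sq_nonneg ‖z - x‖,
    mul_nonneg (div_nonneg K.2 zero_le_two) (sq_nonneg ‖z - x‖)]

/-- Baillon–Haddad: the bounds force `v` to be `K`-Lipschitz, through co-coercivity
`‖v z - v x‖² ≤ K ⟪v z - v x, z - x⟫`. -/
theorem lipschitzWith (hS : HasSmoothConvexBounds f v K) (hK : 0 < K) : LipschitzWith K v := by
  have hK' : (0 : ℝ) < K := hK
  -- compare the bounds at `z - K⁻¹ • (v z - v x)`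
  have key : ∀ x z, ‖v z - v x‖ ^ 2 / (2 * K) ≤ f z - f x - ⟪v x, z - x⟫ := by
    intro x z
    set e := v z - v x
    have hup := hS.upper z (z - (K : ℝ)⁻¹ • e)
    have hlow := hS.lower x (z - (K : ℝ)⁻¹ • e)
    rw [sub_sub_cancel_left, norm_neg, norm_smul, inner_neg_right, real_inner_smul_right,
      Real.norm_of_nonneg (inv_nonneg.2 hK'.le)] at hup
    rw [sub_right_comm, inner_sub_right, real_inner_smul_right] at hlow
    have he : ⟪v z, e⟫ - ⟪v x, e⟫ = ‖e‖ ^ 2 := by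
      rw [← inner_sub_left, real_inner_self_eq_norm_sq]
    have hsq : (K : ℝ) / 2 * ((K : ℝ)⁻¹ * ‖e‖) ^ 2 = ‖e‖ ^ 2 / (2 * K) := by
      field_simp
    have hlin : (K : ℝ)⁻¹ * ⟪v z, e⟫ - (K : ℝ)⁻¹ * ⟪v x, e⟫ = 2 * (‖e‖ ^ 2 / (2 * K)) := by
      rw [← mul_sub, he]
      field_simp
    linarith
  refine LipschitzWith.of_dist_le_mul fun z x => ?_
  rw [dist_eq_norm, dist_eq_norm]
  have hcoco : ‖v z - v x‖ ^ 2 / K ≤ ‖v z - v x‖ * ‖z - x‖ := by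
    have h1 := key x z
    have h2 := key z x
    rw [norm_sub_rev (v x)] at h2
    have hinner : ⟪v x, z - x⟫ + ⟪v z, x - z⟫ = -⟪v z - v x, z - x⟫ := by
      rw [← neg_sub z x, inner_neg_right, inner_sub_left]
      ring
    have hhalf : ‖v z - v x‖ ^ 2 / (2 * K) + ‖v z - v x‖ ^ 2 / (2 * K)
        = ‖v z - v x‖ ^ 2 / K := by
      field_simp
      ring
    linarith [real_inner_le_norm (v z - v x) (z - x)]
  rw [div_le_iff₀ hK'] at hcoco
  rcases (norm_nonneg (v z - v x)).eq_or_lt with h | h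
  · rw [← h]
    positivity
  · exact le_of_mul_le_mul_left (by linarith) h

variable [CompleteSpace E] [CompleteSpace F]

theorem comp_continuousLinearMap (hS : HasSmoothConvexBounds f v K) (M : F →L[ℝ] E) :
    HasSmoothConvexBounds (f ∘ M) (fun x => ContinuousLinearMap.adjoint M (v (M x)))
      (K * ‖M‖₊ ^ 2) where
  lower x z := by
    simpa only [Function.comp_apply, ContinuousLinearMap.adjoint_inner_left, map_sub]
      using hS.lower (M x) (M z)
  upper x z := by
    have hM : ‖M z - M x‖ ^ 2 ≤ ‖M‖ ^ 2 * ‖z - x‖ ^ 2 := by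
      rw [← map_sub, ← mul_pow]
      exact pow_le_pow_left₀ (norm_nonneg _) (M.le_opNorm _) 2
    simp only [Function.comp_apply, ContinuousLinearMap.adjoint_inner_left, map_sub]
    push_cast
    nlinarith [hS.upper (M x) (M z), mul_le_mul_of_nonneg_left hM (div_nonneg K.2 zero_le_two)]

end HasSmoothConvexBounds

end SmoothConvexBounds

theorem stmt_11_general {H : Type*} [NormedAddCommGroup H] [InnerProductSpace ℝ H] [CompleteSpace H]
    {G : Type*} [NormedAddCommGroup G] [InnerProductSpace ℝ G] [CompleteSpace G]
    (M : H →L[ℝ] G)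
    (D : Set G) (hDconv : Convex ℝ D)
    (μ : ℝ) (hμ : 0 < μ)
    (φ : ℝ → ℝ) (heven : ∀ t, φ (-t) = φ t) (hconv : ConvexOn ℝ Set.univ φ)
    (φ' : ℝ → ℝ) (hderiv : ∀ t, HasDerivAt φ (φ' t) t)
    (hlip : LipschitzWith (Real.toNNReal μ) φ')
    (h : H → ℝ) (hdef : ∀ x, h x = φ (Metric.infDist (M x) D))
    (projD : G → G)
    (hproj : ∀ y, projD y ∈ D ∧ ∀ z ∈ D, dist y (projD y) ≤ dist y z) :
    ConvexOn ℝ Set.univ h ∧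
    (∀ x, DifferentiableAt ℝ h x) ∧
    LipschitzWith (Real.toNNReal (μ * ‖M‖ ^ 2)) (fun x => gradient h x) ∧
    (∀ x : H,
      (M x ∉ D → HasGradientAt h
        ((φ' (Metric.infDist (M x) D) / Metric.infDist (M x) D) •
          ContinuousLinearMap.adjoint M (M x - projD (M x))) x) ∧
      (M x ∈ D → HasGradientAt h 0 x)) := by
  have hP : IsNearestPointMap D projD := hproj
  set v : G → G := fun y => (φ' (infDist y D) / infDist y D) • (y - projD y)
  have h0 : φ' 0 = 0 := eq_zero_of_even_of_hasDerivAt heven (hderiv 0)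
  have hG : HasSmoothConvexBounds (fun y => φ (infDist y D)) v (Real.toNNReal μ) :=
    ⟨comp_infDist_add_inner_le hP hDconv hconv hderiv h0,
      comp_infDist_le_add_inner_add_sq hP hconv hderiv h0 hlip⟩
  have hH : HasSmoothConvexBounds h (fun x => ContinuousLinearMap.adjoint M (v (M x)))
      (Real.toNNReal μ * ‖M‖₊ ^ 2) := by
    rw [show h = (fun y => φ (infDist y D)) ∘ M from funext hdef]
    exact hG.comp_continuousLinearMap M
  have hgrad : gradient h = fun x => ContinuousLinearMap.adjoint M (v (M x)) :=
    funext fun x => (hH.hasGradientAt x).gradient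
  refine ⟨hH.convexOn, fun x => (hH.hasGradientAt x).differentiableAt, ?_,
    fun x => ⟨fun _ => ?_, fun hx => ?_⟩⟩
  · have hvlip := (ContinuousLinearMap.adjoint M).lipschitz.comp
      ((hG.lipschitzWith (Real.toNNReal_pos.2 hμ)).comp M.lipschitz)
    have hK : Real.toNNReal (μ * ‖M‖ ^ 2)
        = ‖ContinuousLinearMap.adjoint M‖₊ * (Real.toNNReal μ * ‖M‖₊) := by
      rw [LinearIsometryEquiv.nnnorm_map, Real.toNNReal_mul hμ.le, ← coe_nnnorm,
        ← NNReal.coe_pow, Real.toNNReal_coe]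
      ring
    rw [hgrad, hK]
    exact hvlip
  · simpa [v] using hH.hasGradientAt x
  · simpa [v, hP.apply_eq_self hx] using hH.hasGradientAt x

/-- Let `H`, `G` be real Hilbert spaces, `M : H → G` bounded linear with
`M M* = θ Id` for some `θ > 0`, `D` nonempty closed convex in `G`, `μ > 0`, `φ : ℝ → ℝ`
even convex differentiable with `μ`-Lipschitzian derivative, and `h = φ ∘ d_D ∘ M`.
Then `h` is convex and Fréchet differentiable with a `μ‖M‖²`-Lipschitzian gradient, and
the gradient at `x` is `(φ'(d_D(Mx))/d_D(Mx)) • M*(Mx − proj_D(Mx))` if `Mx ∉ D`, and `0`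
if `Mx ∈ D`. -/
theorem stmt_11 {H : Type*} [NormedAddCommGroup H] [InnerProductSpace ℝ H] [CompleteSpace H]
    {G : Type*} [NormedAddCommGroup G] [InnerProductSpace ℝ G] [CompleteSpace G]
    (M : H →L[ℝ] G) (θ : ℝ) (hθ : 0 < θ)
    (hM : M.comp (ContinuousLinearMap.adjoint M) = θ • ContinuousLinearMap.id ℝ G)
    (D : Set G) (hDne : D.Nonempty) (hDclosed : IsClosed D) (hDconv : Convex ℝ D)
    (μ : ℝ) (hμ : 0 < μ)
    (φ : ℝ → ℝ) (heven : ∀ t, φ (-t) = φ t) (hconv : ConvexOn ℝ Set.univ φ)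
    (φ' : ℝ → ℝ) (hderiv : ∀ t, HasDerivAt φ (φ' t) t)
    (hlip : LipschitzWith (Real.toNNReal μ) φ')
    (h : H → ℝ) (hdef : ∀ x, h x = φ (Metric.infDist (M x) D))
    (projD : G → G)
    (hproj : ∀ y, projD y ∈ D ∧ ∀ z ∈ D, dist y (projD y) ≤ dist y z) :
    ConvexOn ℝ Set.univ h ∧
    (∀ x, DifferentiableAt ℝ h x) ∧
    LipschitzWith (Real.toNNReal (μ * ‖M‖ ^ 2)) (fun x => gradient h x) ∧
    (∀ x : H,
      (M x ∉ D → HasGradientAt h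
        ((φ' (Metric.infDist (M x) D) / Metric.infDist (M x) D) •
          ContinuousLinearMap.adjoint M (M x - projD (M x))) x) ∧
      (M x ∈ D → HasGradientAt h 0 x)) :=
  stmt_11_general M D hDconv μ hμ φ heven hconv φ' hderiv hlip h hdef projD hproj
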